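/- Let χ : ℝ³ × ℝ → ℝ³ be twice continuously differentiable with spatial derivative F(X,t) := D_X χ(X,t) invertible for all (X,t), and let v : ℝ³ × ℝ → ℝ³ be a differentiable field satisfying v(χ(X,t), t) = ∂ₜχ(X,t) for all (X,t). Let φ : ℝ³ × ℝ → ℝ be differentiable and satisfy the mass balance ∂ₜφ + div(φ v) = 0 everywhere. Then for each fixed X the function t ↦ det F(X,t) · φ(χ(X,t), t) is constant. -/

import Mathlib

noncomputable section

/-- The divergence of a vector field on ℝ³: the trace of its Fréchet derivative. -/
def div3 (w : EuclideanSpace ℝ (Fin 3) → EuclideanSpace ℝ (Fin 3))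
    (x : EuclideanSpace ℝ (Fin 3)) : ℝ :=
  LinearMap.trace ℝ (EuclideanSpace ℝ (Fin 3)) (fderiv ℝ w x).toLinearMap

/-!
Write `J = det F` and `L = ∇v` at `(χ(X,t), t)`. Differentiating `v(χ(Y,t),t) = ∂ₜχ(Y,t)` in `Y`
and using the symmetry of the second derivative of `χ` gives `∂ₜF = L F`, hence
`∂ₜJ = J · tr L = J · div v` by Liouville's formula. The mass balance, with
`div(φ v) = φ div v + ∇φ · v`, says that `φ` along the motion has derivative
`∂ₜφ + ∇φ · v = -φ div v`. So `∂ₜ(J φ∘χ) = 0`.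
-/

section Determinant

variable {𝕜 : Type*} [NontriviallyNormedField 𝕜]

open Polynomial in
theorem hasDerivAt_det_one_add_smul {E : Type*} [AddCommGroup E] [Module 𝕜 E]
    [FiniteDimensional 𝕜 E] (M : E →ₗ[𝕜] E) :
    HasDerivAt (fun s : 𝕜 => LinearMap.det (1 + s • M)) (LinearMap.trace 𝕜 E M) 0 := by
  classical
  let b := Module.finBasis 𝕜 E
  let N := LinearMap.toMatrix b b M
  let p : 𝕜[X] := (1 + (X : 𝕜[X]) • N.map C).det
  have hp : (fun s : 𝕜 => LinearMap.det (1 + s • M)) = fun s => p.eval s := by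
    funext s
    rw [← LinearMap.det_toMatrix b, eval_det]
    congr 1
    ext i j
    simp [N, Matrix.one_apply, mul_comm]
  rw [hp, LinearMap.trace_eq_matrix_trace 𝕜 b, ← Matrix.derivative_det_one_add_X_smul]
  exact p.hasDerivAt 0

variable {E : Type*} [NormedAddCommGroup E] [NormedSpace 𝕜 E] [FiniteDimensional 𝕜 E]

theorem trace_fderiv_smul {φ : E → 𝕜} {w : E → E} {x : E} (hφ : DifferentiableAt 𝕜 φ x)
    (hw : DifferentiableAt 𝕜 w x) :
    LinearMap.trace 𝕜 E (fderiv 𝕜 (fun y => φ y • w y) x : E →ₗ[𝕜] E)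
      = φ x * LinearMap.trace 𝕜 E (fderiv 𝕜 w x : E →ₗ[𝕜] E) + fderiv 𝕜 φ x (w x) := by
  rw [fderiv_fun_smul hφ hw]
  simp

variable [CompleteSpace 𝕜]

theorem ContinuousLinearMap.differentiable_det : Differentiable 𝕜 fun A : E →L[𝕜] E => A.det := by
  classical
  let b := Module.finBasis 𝕜 E
  have hentry : ∀ i j, Differentiable 𝕜 fun A : E →L[𝕜] E => LinearMap.toMatrix b b A i j :=
    fun i j => (((LinearMap.proj j).comp (LinearMap.proj i)).comp
      ((LinearMap.toMatrix b b).toLinearMap.comp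
        (ContinuousLinearMap.coeLM 𝕜))).toContinuousLinearMap.differentiable
  simp_rw [← LinearMap.det_toMatrix b, Matrix.det_apply]
  fun_prop

-- Liouville's formula, from the factorization `F + s • L F = (1 + s • L) F`.
theorem HasDerivAt.det_of_eq_comp {F : 𝕜 → E →L[𝕜] E} {L : E →L[𝕜] E} {t : 𝕜}
    (hF : HasDerivAt F (L ∘L F t) t) :
    HasDerivAt (fun s => (F s).det) ((F t).det * LinearMap.trace 𝕜 E L) t := by
  have hdet : HasFDerivAt (fun A : E →L[𝕜] E => A.det) _ (F t) :=
    (ContinuousLinearMap.differentiable_det (F t)).hasFDerivAt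
  have hline : HasDerivAt (fun s : 𝕜 => F t + s • L ∘L F t) (L ∘L F t) 0 := by
    simpa using ((hasDerivAt_id (0 : 𝕜)).smul_const (L ∘L F t)).const_add (F t)
  have hfactor : ∀ s : 𝕜, (F t + s • L ∘L F t).det
      = (F t).det * LinearMap.det (1 + s • (L : E →ₗ[𝕜] E)) := fun s => by
    rw [mul_comm, ← map_mul]
    congr 1
  have hJacobi : fderiv 𝕜 (fun A : E →L[𝕜] E => A.det) (F t) (L ∘L F t)
      = (F t).det * LinearMap.trace 𝕜 E L := by
    refine (hdet.comp_hasDerivAt_of_eq 0 hline (by simp)).unique ?_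
    simp_rw [Function.comp_def, hfactor]
    exact (hasDerivAt_det_one_add_smul _).const_mul _
  exact hJacobi ▸ hdet.comp_hasDerivAt t hF

end Determinant

section Kinematics

variable {E G : Type*} [NormedAddCommGroup E] [NormedSpace ℝ E]
  [NormedAddCommGroup G] [NormedSpace ℝ G]

theorem hasFDerivAt_partial_fst {f : E × ℝ → G} {x : E} {t : ℝ}
    (hf : DifferentiableAt ℝ f (x, t)) :
    HasFDerivAt (fun y => f (y, t)) (fderiv ℝ f (x, t) ∘L ContinuousLinearMap.inl ℝ E ℝ) x :=
  hf.hasFDerivAt.comp x (hasFDerivAt_prodMk_left x t)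

theorem hasDerivAt_partial_snd {f : E × ℝ → G} {x : E} {t : ℝ}
    (hf : DifferentiableAt ℝ f (x, t)) :
    HasDerivAt (fun s => f (x, s)) (fderiv ℝ f (x, t) (0, 1)) t :=
  hf.hasFDerivAt.comp_hasDerivAt t ((hasDerivAt_const t x).prodMk (hasDerivAt_id t))

theorem hasDerivAt_fderiv_partial_fst {χ : E × ℝ → G} (hχ : ContDiff ℝ 2 χ) (X : E) (t : ℝ) :
    HasDerivAt (fun s => fderiv ℝ (fun Y => χ (Y, s)) X)
      (fderiv ℝ (fun Y => deriv (fun s => χ (Y, s)) t) X) t := by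
  have hχ' : Differentiable ℝ χ := hχ.differentiable (by norm_num)
  have hDχ : Differentiable ℝ (fderiv ℝ χ) :=
    (hχ.fderiv_right (m := 1) (by norm_num)).differentiable one_ne_zero
  have hspace : (fun s => fderiv ℝ (fun Y => χ (Y, s)) X)
      = fun s => fderiv ℝ χ (X, s) ∘L ContinuousLinearMap.inl ℝ E ℝ :=
    funext fun s => (hasFDerivAt_partial_fst (hχ' (X, s))).fderiv
  have htime : (fun Y => deriv (fun s => χ (Y, s)) t) = fun Y => fderiv ℝ χ (Y, t) (0, 1) :=
    funext fun Y => (hasDerivAt_partial_snd (hχ' (Y, t))).deriv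
  have hmixed := (hasFDerivAt_partial_fst (hDχ (X, t))).clm_apply
    (hasFDerivAt_const ((0 : E), (1 : ℝ)) X)
  rw [hspace, htime, hmixed.fderiv]
  refine ((hasDerivAt_partial_snd (hDχ (X, t))).clm_comp (hasDerivAt_const t _)).congr_deriv ?_
  ext h
  simpa using hχ.contDiffAt.isSymmSndFDerivAt (by simp) (0, 1) (h, 0)

theorem hasDerivAt_comp_prodMk_id {φ : E × ℝ → G} {c : ℝ → E} {u : E} {t : ℝ}
    (hφ : DifferentiableAt ℝ φ (c t, t)) (hc : HasDerivAt c u t) :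
    HasDerivAt (fun s => φ (c s, s))
      (fderiv ℝ (fun y => φ (y, t)) (c t) u + deriv (fun s => φ (c t, s)) t) t := by
  rw [(hasFDerivAt_partial_fst hφ).fderiv, (hasDerivAt_partial_snd hφ).deriv]
  have hcurve : HasDerivAt (fun s => (c s, s)) (u, (1 : ℝ)) t := hc.prodMk (hasDerivAt_id t)
  refine (hφ.hasFDerivAt.comp_hasDerivAt (f := fun s => (c s, s)) t hcurve).congr_deriv ?_
  rw [ContinuousLinearMap.comp_apply, ← map_add]
  simp

theorem hasDerivAt_fderiv_partial_fst_of_velocity {χ v : E × ℝ → E} (hχ : ContDiff ℝ 2 χ) {X : E}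
    {t : ℝ} (hv : DifferentiableAt ℝ v (χ (X, t), t))
    (hval : ∀ Y, v (χ (Y, t), t) = deriv (fun s => χ (Y, s)) t) :
    HasDerivAt (fun s => fderiv ℝ (fun Y => χ (Y, s)) X)
      (fderiv ℝ (fun y => v (y, t)) (χ (X, t)) ∘L fderiv ℝ (fun Y => χ (Y, t)) X) t := by
  have hvel : (fun Y => deriv (fun s => χ (Y, s)) t) = (fun y => v (y, t)) ∘ fun Y => χ (Y, t) :=
    funext fun Y => (hval Y).symm
  have hχX : DifferentiableAt ℝ (fun Y => χ (Y, t)) X :=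
    (hasFDerivAt_partial_fst ((hχ.differentiable (by norm_num)) (X, t))).differentiableAt
  have := hasDerivAt_fderiv_partial_fst hχ X t
  rwa [hvel, fderiv_comp X (hasFDerivAt_partial_fst hv).differentiableAt hχX] at this

end Kinematics

theorem referential_volume_fraction_constant_general
    (χ : EuclideanSpace ℝ (Fin 3) × ℝ → EuclideanSpace ℝ (Fin 3))
    (hχ : ContDiff ℝ 2 χ)
    (v : EuclideanSpace ℝ (Fin 3) × ℝ → EuclideanSpace ℝ (Fin 3))
    (hv : Differentiable ℝ v)
    (hval : ∀ (X : EuclideanSpace ℝ (Fin 3)) (t : ℝ),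
      v (χ (X, t), t) = deriv (fun s => χ (X, s)) t)
    (φ : EuclideanSpace ℝ (Fin 3) × ℝ → ℝ)
    (hφ : Differentiable ℝ φ)
    (hmass : ∀ (x : EuclideanSpace ℝ (Fin 3)) (t : ℝ),
      deriv (fun s => φ (x, s)) t + div3 (fun y => φ (y, t) • v (y, t)) x = 0)
    (X : EuclideanSpace ℝ (Fin 3)) :
    ∀ t₁ t₂ : ℝ,
      LinearMap.det ((fderiv ℝ (fun Y => χ (Y, t₁)) X).toLinearMap) * φ (χ (X, t₁), t₁)
        = LinearMap.det ((fderiv ℝ (fun Y => χ (Y, t₂)) X).toLinearMap) * φ (χ (X, t₂), t₂) := by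
  have hmotion : ∀ t, HasDerivAt (fun s => χ (X, s)) (v (χ (X, t), t)) t := fun t => by
    rw [hval]
    exact (hasDerivAt_partial_snd (hχ.differentiable two_ne_zero (X, t))).differentiableAt.hasDerivAt
  have hconst : ∀ t, HasDerivAt
      (fun s => (fderiv ℝ (fun Y => χ (Y, s)) X).det * φ (χ (X, s), s)) 0 t := by
    intro t
    have hJ := (hasDerivAt_fderiv_partial_fst_of_velocity hχ (hv (χ (X, t), t))
      (hval · t)).det_of_eq_comp
    have hφ_motion := hasDerivAt_comp_prodMk_id (hφ _) (hmotion t)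
    have hmass_t := hmass (χ (X, t)) t
    rw [div3, trace_fderiv_smul (by fun_prop) (by fun_prop)] at hmass_t
    refine (hJ.mul hφ_motion).congr_deriv ?_
    linear_combination (fderiv ℝ (fun Y => χ (Y, t)) X).det * hmass_t
  exact is_const_of_deriv_eq_zero (fun t => (hconst t).differentiableAt) (fun t => (hconst t).deriv)

/-- Existence of the referential volume fraction: for a `C²` motion `χ` with everywhere
invertible deformation gradient, Eulerian velocity `v` with `v(χ(X,t),t) = ∂ₜχ(X,t)`, and a
differentiable `φ` satisfying the mass balance `∂ₜφ + div(φ v) = 0` everywhere, the function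
`t ↦ det F(X,t) · φ(χ(X,t), t)` is constant for each fixed `X`. -/
theorem referential_volume_fraction_constant
    (χ : EuclideanSpace ℝ (Fin 3) × ℝ → EuclideanSpace ℝ (Fin 3))
    (hχ : ContDiff ℝ 2 χ)
    (hFinv : ∀ (X : EuclideanSpace ℝ (Fin 3)) (t : ℝ),
      IsUnit ((fderiv ℝ (fun Y => χ (Y, t)) X).toLinearMap))
    (v : EuclideanSpace ℝ (Fin 3) × ℝ → EuclideanSpace ℝ (Fin 3))
    (hv : Differentiable ℝ v)
    (hval : ∀ (X : EuclideanSpace ℝ (Fin 3)) (t : ℝ),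
      v (χ (X, t), t) = deriv (fun s => χ (X, s)) t)
    (φ : EuclideanSpace ℝ (Fin 3) × ℝ → ℝ)
    (hφ : Differentiable ℝ φ)
    (hmass : ∀ (x : EuclideanSpace ℝ (Fin 3)) (t : ℝ),
      deriv (fun s => φ (x, s)) t + div3 (fun y => φ (y, t) • v (y, t)) x = 0)
    (X : EuclideanSpace ℝ (Fin 3)) :
    ∀ t₁ t₂ : ℝ,
      LinearMap.det ((fderiv ℝ (fun Y => χ (Y, t₁)) X).toLinearMap) * φ (χ (X, t₁), t₁)
        = LinearMap.det ((fderiv ℝ (fun Y => χ (Y, t₂)) X).toLinearMap) * φ (χ (X, t₂), t₂) :=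
  referential_volume_fraction_constant_general χ hχ v hv hval φ hφ hmass X
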